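/- arXiv:2309.09033 — 2 statements merged into one kernel-verified Lean document; each statement's English description precedes it below -/
import Mathlib

section
/- For any pair of discrete random variables (X,Y) on finite alphabets with H(X) > 0 and any 0 ≤ ε < I(X;Y), the privacy-utility function h_ε(P_{XY}) = sup over channels P_{U|X,Y} with I(U;X) ≤ ε of I(Y;U) satisfies h_ε(P_{XY}) ≥ H(Y) - H(X) + ε, i.e., the lower bound L1 holds. -/
open scoped Classical
open Real

/-- Probability that random variable `X` takes value `a` under pmf `p` on sample space `Ω`. -/
noncomputable def pr {Ω α : Type} [Fintype Ω] (p : Ω → ℝ) (X : Ω → α) (a : α) : ℝ :=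
  ∑ ω, if X ω = a then p ω else 0

/-- Shannon entropy (base 2) of the random variable `X`. -/
noncomputable def ent {Ω α : Type} [Fintype Ω] [Fintype α] (p : Ω → ℝ) (X : Ω → α) : ℝ :=
  -∑ a, pr p X a * Real.logb 2 (pr p X a)

/-- Conditional entropy `H(X|Y)`. -/
noncomputable def entC {Ω α β : Type} [Fintype Ω] [Fintype α] [Fintype β]
    (p : Ω → ℝ) (X : Ω → α) (Y : Ω → β) : ℝ :=
  ent p (fun ω => (X ω, Y ω)) - ent p Y

/-- Mutual information `I(X;Y)`. -/
noncomputable def mi {Ω α β : Type} [Fintype Ω] [Fintype α] [Fintype β]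
    (p : Ω → ℝ) (X : Ω → α) (Y : Ω → β) : ℝ :=
  ent p X + ent p Y - ent p (fun ω => (X ω, Y ω))

/-- Conditional mutual information `I(X;U|Y)`. -/
noncomputable def miC {Ω α β γ : Type} [Fintype Ω] [Fintype α] [Fintype β] [Fintype γ]
    (p : Ω → ℝ) (X : Ω → α) (U : Ω → β) (Y : Ω → γ) : ℝ :=
  entC p X Y + entC p U Y - entC p (fun ω => (X ω, U ω)) Y

/-- Independence of random variables `X` and `Y` under pmf `p`. -/
def IndepRV {Ω α β : Type} [Fintype Ω] (p : Ω → ℝ) (X : Ω → α) (Y : Ω → β) : Prop :=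
  ∀ a b, pr p (fun ω => (X ω, Y ω)) (a, b) = pr p X a * pr p Y b

/-- The privacy-utility trade-off function: the supremum of I(Y;U) over all channels
P_{U|X,Y} (to an arbitrary finite alphabet) whose leakage satisfies I(U;X) ≤ ε, where the
joint pmf of (X, Y) is p. -/
noncomputable def hEps {α β : Type} [Fintype α] [Fintype β] (p : α × β → ℝ) (ε : ℝ) : ℝ :=
  sSup {r : ℝ | ∃ (n : ℕ) (q : α × β → Fin n → ℝ),
    (∀ z u, 0 ≤ q z u) ∧ (∀ z, ∑ u, q z u = 1) ∧
    mi (fun z : (α × β) × Fin n => p z.1 * q z.1 z.2) (fun z => z.1.1) (fun z => z.2) ≤ ε ∧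
    r = mi (fun z : (α × β) × Fin n => p z.1 * q z.1 z.2) (fun z => z.1.2) (fun z => z.2)}

section helpers
variable {Ω Ω' α β γ δ : Type}

lemma mlm2 (a b : ℝ) : a * b * Real.logb 2 (a * b) =
    a * b * Real.logb 2 a + a * b * Real.logb 2 b := by
  rcases eq_or_ne a 0 with h | h
  · simp [h]
  rcases eq_or_ne b 0 with h' | h'
  · simp [h']
  rw [Real.logb_mul h h']; ring

lemma mlm3 (a b c : ℝ) : a * b * c * Real.logb 2 (a * b * c) =
    a * b * c * Real.logb 2 a + a * b * c * Real.logb 2 b + a * b * c * Real.logb 2 c := by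
  have h1 := mlm2 (a * b) c
  have h2 := mlm2 a b
  linear_combination h1 + c * h2

lemma mul_logb_mono {a b : ℝ} (h0 : 0 ≤ a) (h : a ≤ b) :
    a * Real.logb 2 a ≤ a * Real.logb 2 b := by
  rcases eq_or_lt_of_le h0 with h' | h'
  · simp [← h']
  exact mul_le_mul_of_nonneg_left
    (Real.logb_le_logb_of_le one_lt_two h' h) h0

lemma pr_nonneg [Fintype Ω] {p : Ω → ℝ} (hp : ∀ ω, 0 ≤ p ω) (X : Ω → α) (a : α) :
    0 ≤ pr p X a := by
  refine Finset.sum_nonneg fun ω _ => ?_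
  split <;> simp [hp ω]

lemma pr_eq_sum_mul [Fintype Ω] (p : Ω → ℝ) (X : Ω → α) (a : α) :
    pr p X a = ∑ ω, p ω * (if X ω = a then 1 else 0) := by
  unfold pr
  refine Finset.sum_congr rfl fun ω _ => ?_
  split <;> simp

lemma ent_eq_sum_omega [Fintype Ω] [Fintype α] (p : Ω → ℝ) (X : Ω → α) :
    ent p X = -∑ ω, p ω * Real.logb 2 (pr p X (X ω)) := by
  unfold ent
  congr 1
  calc ∑ a, pr p X a * Real.logb 2 (pr p X a)
      = ∑ a, ∑ ω, (if X ω = a then p ω * Real.logb 2 (pr p X a) else 0) := by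
        refine Finset.sum_congr rfl fun a _ => ?_
        rw [pr, Finset.sum_mul]
        refine Finset.sum_congr rfl fun ω _ => ?_
        split <;> simp
    _ = ∑ ω, ∑ a, (if X ω = a then p ω * Real.logb 2 (pr p X a) else 0) :=
        Finset.sum_comm
    _ = ∑ ω, p ω * Real.logb 2 (pr p X (X ω)) := by
        refine Finset.sum_congr rfl fun ω _ => ?_
        rw [Finset.sum_ite_eq]
        simp

lemma ent_congr [Fintype Ω] [Fintype Ω'] [Fintype α] {p : Ω → ℝ} {p' : Ω' → ℝ}
    {X : Ω → α} {X' : Ω' → α} (h : ∀ a, pr p X a = pr p' X' a) :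
    ent p X = ent p' X' := by
  unfold ent; simp only [h]

lemma pr_reindex [Fintype Ω] [Fintype Ω'] (E : Ω ≃ Ω') (p' : Ω' → ℝ) (X' : Ω' → α) (a : α) :
    pr (fun ω => p' (E ω)) (fun ω => X' (E ω)) a = pr p' X' a := by
  unfold pr
  exact Equiv.sum_comp E (fun ω' => if X' ω' = a then p' ω' else 0)

lemma ent_comp_equiv [Fintype Ω] [Fintype γ] [Fintype δ] (p : Ω → ℝ) (X : Ω → γ) (e : γ ≃ δ) :
    ent p (fun ω => e (X ω)) = ent p X := by
  unfold ent
  congr 1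
  rw [← Equiv.sum_comp e (fun d => pr p (fun ω => e (X ω)) d *
      Real.logb 2 (pr p (fun ω => e (X ω)) d))]
  refine Finset.sum_congr rfl fun g _ => ?_
  have : pr p (fun ω => e (X ω)) (e g) = pr p X g := by
    unfold pr
    refine Finset.sum_congr rfl fun ω _ => ?_
    simp
  rw [this]

/-- merging decreases entropy, summed form -/
lemma sum_mul_logb_le {s : Finset β} (f : β → ℝ) (hf : ∀ i ∈ s, 0 ≤ f i) :
    ∑ i ∈ s, f i * Real.logb 2 (f i) ≤
      (∑ i ∈ s, f i) * Real.logb 2 (∑ i ∈ s, f i) := by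
  have hS : ∀ i ∈ s, f i ≤ ∑ j ∈ s, f j := fun i hi =>
    Finset.single_le_sum hf hi
  calc ∑ i ∈ s, f i * Real.logb 2 (f i)
      ≤ ∑ i ∈ s, f i * Real.logb 2 (∑ j ∈ s, f j) := by
        refine Finset.sum_le_sum fun i hi => ?_
        exact mul_logb_mono (hf i hi) (hS i hi)
    _ = (∑ i ∈ s, f i) * Real.logb 2 (∑ i ∈ s, f i) := by rw [Finset.sum_mul]

lemma pr_pair_marg [Fintype Ω] [Fintype γ] (p : Ω → ℝ) (V : Ω → γ) (W : Ω → δ) (w : δ) :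
    pr p W w = ∑ v, pr p (fun ω => (V ω, W ω)) (v, w) := by
  unfold pr
  rw [Finset.sum_comm]
  refine Finset.sum_congr rfl fun ω _ => ?_
  rcases eq_or_ne (W ω) w with h | h
  · rw [if_pos h]
    rw [Finset.sum_eq_single (V ω)]
    · simp [h]
    · intro v _ hv; rw [if_neg (by simp [Prod.ext_iff]; intro hv'; exact absurd hv'.symm hv)]
    · simp
  · rw [if_neg h]
    rw [Finset.sum_eq_zero]
    intro v _; rw [if_neg (by simp [Prod.ext_iff]; intro _; exact h)]

lemma ent_le_ent_pair [Fintype Ω] [Fintype γ] [Fintype δ] {p : Ω → ℝ}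
    (hp : ∀ ω, 0 ≤ p ω) (V : Ω → γ) (W : Ω → δ) :
    ent p W ≤ ent p (fun ω => (V ω, W ω)) := by
  unfold ent
  rw [neg_le_neg_iff]
  calc ∑ a : γ × δ, pr p (fun ω => (V ω, W ω)) a * Real.logb 2 (pr p (fun ω => (V ω, W ω)) a)
      = ∑ w, ∑ v, pr p (fun ω => (V ω, W ω)) (v, w) *
          Real.logb 2 (pr p (fun ω => (V ω, W ω)) (v, w)) := by
        rw [Fintype.sum_prod_type, Finset.sum_comm]
    _ ≤ ∑ w, pr p W w * Real.logb 2 (pr p W w) := by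
        refine Finset.sum_le_sum fun w _ => ?_
        rw [pr_pair_marg p V W w]
        exact sum_mul_logb_le _ (fun v _ => pr_nonneg hp _ _)

end helpers

section construction
variable {α β : Type} [Fintype α] [Fintype β]

noncomputable def pmx (p : α × β → ℝ) (x : α) : ℝ := ∑ y, p (x, y)
noncomputable def pmy (p : α × β → ℝ) (y : β) : ℝ := ∑ x, p (x, y)

noncomputable def cnd (p : α × β → ℝ) (x : α) (y : β) : ℝ :=
  if pmx p x = 0 then (Fintype.card β : ℝ)⁻¹ else p (x, y) / pmx p x

noncomputable def mm (p : α × β → ℝ) (u0 : α → β) : ℝ := ∏ x, cnd p x (u0 x)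

noncomputable def wgt (lam : ℝ) (x : α) : Option α → ℝ
  | some x' => if x' = x then lam else 0
  | none => 1 - lam

noncomputable def Qc (p : α × β → ℝ) (lam : ℝ) (z : α × β) (g : (α → β) × Option α) : ℝ :=
  (if g.1 z.1 = z.2 then 1 else 0) *
    (∏ x' ∈ Finset.univ.erase z.1, cnd p x' (g.1 x')) * wgt lam z.1 g.2

variable {p : α × β → ℝ} {lam : ℝ}

lemma pmx_nonneg (hp0 : ∀ z, 0 ≤ p z) (x : α) : 0 ≤ pmx p x :=
  Finset.sum_nonneg fun y _ => hp0 _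

lemma pr_fst (x : α) : pr p (fun z : α × β => z.1) x = pmx p x := by
  rw [pr, Fintype.sum_prod_type, pmx]
  rw [Finset.sum_eq_single x]
  · simp
  · intro a _ ha; rw [Finset.sum_eq_zero]; intro b _; rw [if_neg ha]
  · simp

lemma pr_snd (y : β) : pr p (fun z : α × β => z.2) y = pmy p y := by
  rw [pr, Fintype.sum_prod_type_right, pmy]
  rw [Finset.sum_eq_single y]
  · simp
  · intro b _ hb; rw [Finset.sum_eq_zero]; intro a _; rw [if_neg hb]
  · simp

lemma pmx_sum (hp1 : ∑ z, p z = 1) : ∑ x, pmx p x = 1 := by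
  rw [← hp1, Fintype.sum_prod_type]; rfl

lemma card_beta_pos (hp1 : ∑ z, p z = 1) : 0 < (Fintype.card β : ℝ) := by
  by_contra h
  push_neg at h
  have h0 : Fintype.card β = 0 := by exact_mod_cast le_antisymm h (by positivity)
  have : IsEmpty β := Fintype.card_eq_zero_iff.mp h0
  have : IsEmpty (α × β) := by infer_instance
  simp at hp1

lemma cnd_nonneg (hp0 : ∀ z, 0 ≤ p z) (hp1 : ∑ z, p z = 1) (x : α) (y : β) :
    0 ≤ cnd p x y := by
  unfold cnd
  split
  · positivity
  · have h1 := pmx_nonneg hp0 x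
    have := hp0 (x, y)
    positivity

lemma cnd_sum (hp0 : ∀ z, 0 ≤ p z) (hp1 : ∑ z, p z = 1) (x : α) :
    ∑ y, cnd p x y = 1 := by
  have hc := card_beta_pos (p := p) hp1
  by_cases h : pmx p x = 0
  · simp only [cnd, if_pos h]
    rw [Finset.sum_const, Finset.card_univ, nsmul_eq_mul]
    field_simp
  · simp only [cnd, if_neg h]
    rw [← Finset.sum_div, ← pmx]
    field_simp

lemma pmx_mul_cnd (hp0 : ∀ z, 0 ≤ p z) (x : α) (y : β) :
    pmx p x * cnd p x y = p (x, y) := by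
  by_cases h : pmx p x = 0
  · simp only [cnd, if_pos h]
    rw [h, zero_mul]
    symm
    have hle : p (x, y) ≤ pmx p x :=
      Finset.single_le_sum (fun y' _ => hp0 (x, y')) (Finset.mem_univ y)
    have := hp0 (x, y)
    linarith [hle.trans_eq h]
  · simp only [cnd, if_neg h]
    field_simp

lemma mm_nonneg (hp0 : ∀ z, 0 ≤ p z) (hp1 : ∑ z, p z = 1) (u0 : α → β) : 0 ≤ mm p u0 :=
  Finset.prod_nonneg fun x _ => cnd_nonneg hp0 hp1 x (u0 x)

lemma mm_sum (hp0 : ∀ z, 0 ≤ p z) (hp1 : ∑ z, p z = 1) : ∑ u0 : α → β, mm p u0 = 1 := by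
  unfold mm
  rw [← Fintype.piFinset_univ, ← Finset.prod_univ_sum]
  rw [Finset.prod_congr rfl fun x _ => cnd_sum hp0 hp1 x]
  simp

end construction

section construction2
variable {α β : Type} [Fintype α] [Fintype β] {p : α × β → ℝ} {lam : ℝ}

lemma wgt_nonneg (h0 : 0 ≤ lam) (h1 : lam ≤ 1) (x : α) (w : Option α) :
    0 ≤ wgt lam x w := by
  cases w with
  | none => simp [wgt]; linarith
  | some x' =>
    simp only [wgt]
    split
    · exact h0
    · exact le_rfl

lemma wgt_sum (x : α) : ∑ w : Option α, wgt lam x w = 1 := by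
  rw [Fintype.sum_option]
  simp only [wgt]
  rw [Finset.sum_ite_eq' Finset.univ x (fun _ => lam)]
  simp

/-- weighted sum over Option α collapses -/
lemma wgt_eval (x : α) (G : Option α → ℝ) :
    ∑ w : Option α, wgt lam x w * G w = lam * G (some x) + (1 - lam) * G none := by
  rw [Fintype.sum_option]
  simp only [wgt]
  have : ∑ x' : α, (if x' = x then lam else 0) * G (some x')
      = lam * G (some x) := by
    rw [Finset.sum_eq_single x]
    · simp
    · intro x' _ hx'; rw [if_neg hx', zero_mul]
    · simp
  rw [this]; ring

lemma Qc_nonneg (hp0 : ∀ z, 0 ≤ p z) (hp1 : ∑ z, p z = 1) (h0 : 0 ≤ lam) (h1 : lam ≤ 1)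
    (z : α × β) (g : (α → β) × Option α) : 0 ≤ Qc p lam z g := by
  unfold Qc
  have hw := wgt_nonneg h0 h1 z.1 g.2
  have hprod : 0 ≤ ∏ x' ∈ Finset.univ.erase z.1, cnd p x' (g.1 x') :=
    Finset.prod_nonneg fun x' _ => cnd_nonneg hp0 hp1 x' (g.1 x')
  have hind : (0:ℝ) ≤ if g.1 z.1 = z.2 then 1 else 0 := by split <;> norm_num
  exact mul_nonneg (mul_nonneg hind hprod) hw

lemma Qc_sum (hp0 : ∀ z, 0 ≤ p z) (hp1 : ∑ z, p z = 1) (z : α × β) :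
    ∑ g : (α → β) × Option α, Qc p lam z g = 1 := by
  unfold Qc
  rw [Fintype.sum_prod_type]
  have step1 : ∀ u0 : α → β,
      ∑ w : Option α, (if u0 z.1 = z.2 then (1:ℝ) else 0) *
        (∏ x' ∈ Finset.univ.erase z.1, cnd p x' (u0 x')) * wgt lam z.1 w
      = (if u0 z.1 = z.2 then (1:ℝ) else 0) *
        (∏ x' ∈ Finset.univ.erase z.1, cnd p x' (u0 x')) := by
    intro u0
    rw [← Finset.mul_sum, wgt_sum, mul_one]
  rw [Finset.sum_congr rfl fun u0 _ => step1 u0]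
  -- now use the f-trick
  have key : ∀ u0 : α → β,
      (if u0 z.1 = z.2 then (1:ℝ) else 0) *
        (∏ x' ∈ Finset.univ.erase z.1, cnd p x' (u0 x'))
      = ∏ x', (fun x' b => if x' = z.1 then (if b = z.2 then (1:ℝ) else 0) else cnd p x' b)
          x' (u0 x') := by
    intro u0
    rw [← Finset.mul_prod_erase Finset.univ _ (Finset.mem_univ z.1)]
    simp only [if_pos rfl]
    congr 1
    refine Finset.prod_congr rfl fun x' hx' => ?_
    rw [if_neg (Finset.ne_of_mem_erase hx')]
  rw [Finset.sum_congr rfl fun u0 _ => key u0]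
  have base := Finset.prod_univ_sum (fun _ : α => (Finset.univ : Finset β))
    (fun x' b => if x' = z.1 then (if b = z.2 then (1:ℝ) else 0) else cnd p x' b)
  rw [Fintype.piFinset_univ] at base
  rw [← base]
  have : ∀ x' : α, ∑ b ∈ Finset.univ,
      (if x' = z.1 then (if b = z.2 then (1:ℝ) else 0) else cnd p x' b) = 1 := by
    intro x'
    by_cases h : x' = z.1
    · simp only [if_pos h]
      rw [Finset.sum_ite_eq' Finset.univ z.2 (fun _ => (1:ℝ))]
      simp
    · simp only [if_neg h]
      exact cnd_sum hp0 hp1 x'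
  rw [Finset.prod_congr rfl fun x' _ => this x']
  simp

/-- joint pmf in simplified form -/
lemma P_eq (hp0 : ∀ z, 0 ≤ p z) (x : α) (y : β) (u0 : α → β) (w : Option α) :
    p (x, y) * Qc p lam (x, y) (u0, w) =
      (if u0 x = y then (1:ℝ) else 0) * (pmx p x * mm p u0 * wgt lam x w) := by
  unfold Qc
  simp only
  by_cases h : u0 x = y
  · rw [if_pos h]
    have heq : pmx p x * mm p u0 =
        p (x, y) * ∏ x' ∈ Finset.univ.erase x, cnd p x' (u0 x') := by
      unfold mm
      rw [← Finset.mul_prod_erase Finset.univ _ (Finset.mem_univ x), ← mul_assoc,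
        pmx_mul_cnd hp0 x (u0 x), h]
    rw [heq]; ring
  · rw [if_neg h]; ring

/-- the fundamental reduction: sums against the joint pmf -/
lemma Rlem (hp0 : ∀ z, 0 ≤ p z) (F : ((α × β) × ((α → β) × Option α)) → ℝ) :
    ∑ ω : (α × β) × ((α → β) × Option α), (p ω.1 * Qc p lam ω.1 ω.2) * F ω =
      ∑ x, ∑ u0, ∑ w, pmx p x * mm p u0 * wgt lam x w * F ((x, u0 x), (u0, w)) := by
  simp only [Fintype.sum_prod_type]
  refine Finset.sum_congr rfl fun x _ => ?_
  rw [Finset.sum_comm]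
  refine Finset.sum_congr rfl fun u0 _ => ?_
  rw [Finset.sum_comm]
  refine Finset.sum_congr rfl fun w _ => ?_
  calc ∑ y, p (x, y) * Qc p lam (x, y) (u0, w) * F ((x, y), (u0, w))
      = ∑ y, (if u0 x = y then
          pmx p x * mm p u0 * wgt lam x w * F ((x, y), (u0, w)) else 0) := by
        refine Finset.sum_congr rfl fun y _ => ?_
        rw [P_eq hp0]
        by_cases h : u0 x = y
        · rw [if_pos h, if_pos h]; ring
        · rw [if_neg h, if_neg h]; ring
    _ = pmx p x * mm p u0 * wgt lam x w * F ((x, u0 x), (u0, w)) := by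
        rw [Finset.sum_ite_eq]
        simp

end construction2

section bilin
variable {ι κ : Type} [Fintype ι] [Fintype κ]

lemma sum_sum_mulB (f : ι → ℝ) (g : κ → ℝ) (hg : ∑ j, g j = 1) (B : ι → ℝ) :
    ∑ i, ∑ j, f i * g j * B i = ∑ i, f i * B i := by
  refine Finset.sum_congr rfl fun i _ => ?_
  have : ∀ j, f i * g j * B i = (f i * B i) * g j := fun j => by ring
  rw [Finset.sum_congr rfl fun j _ => this j, ← Finset.mul_sum, hg, mul_one]

lemma sum_sum_mulC (f : ι → ℝ) (g : κ → ℝ) (hf : ∑ i, f i = 1) (C : κ → ℝ) :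
    ∑ i, ∑ j, f i * g j * C j = ∑ j, g j * C j := by
  rw [Finset.sum_comm]
  have : ∀ j i, f i * g j * C j = g j * f i * C j := fun j i => by ring
  rw [Finset.sum_congr rfl fun j _ => Finset.sum_congr rfl fun i _ => this j i]
  exact sum_sum_mulB g f hf C

lemma sum_sum_constA (f : ι → ℝ) (g : κ → ℝ) (hf : ∑ i, f i = 1) (hg : ∑ j, g j = 1)
    (A : ℝ) : ∑ i, ∑ j, f i * g j * A = A := by
  rw [sum_sum_mulB f g hg (fun _ => A), ← Finset.sum_mul, hf, one_mul]

lemma bilin (f : ι → ℝ) (g : κ → ℝ) (hf : ∑ i, f i = 1) (hg : ∑ j, g j = 1)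
    (A : ℝ) (B : ι → ℝ) (C : κ → ℝ) (D : ι → κ → ℝ) :
    ∑ i, ∑ j, f i * g j * (A + B i + C j + D i j) =
      A + (∑ i, f i * B i) + (∑ j, g j * C j) + ∑ i, ∑ j, f i * g j * D i j := by
  have expand : ∀ i j, f i * g j * (A + B i + C j + D i j)
      = f i * g j * A + f i * g j * B i + f i * g j * C j + f i * g j * D i j := by
    intros; ring
  calc ∑ i, ∑ j, f i * g j * (A + B i + C j + D i j)
      = (∑ i, ∑ j, f i * g j * A) + (∑ i, ∑ j, f i * g j * B i)
        + (∑ i, ∑ j, f i * g j * C j) + ∑ i, ∑ j, f i * g j * D i j := by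
        simp only [expand, Finset.sum_add_distrib]
    _ = A + (∑ i, f i * B i) + (∑ j, g j * C j) + ∑ i, ∑ j, f i * g j * D i j := by
        rw [sum_sum_constA f g hf hg, sum_sum_mulB f g hg, sum_sum_mulC f g hf]

end bilin

section prform
variable {α β : Type} [Fintype α] [Fintype β] {p : α × β → ℝ} {lam : ℝ}

/-- the fiber weight function g(u0, y) -/
noncomputable def gg (p : α × β → ℝ) (u0 : α → β) (y : β) : ℝ :=
  ∑ x, if u0 x = y then pmx p x else 0

lemma prU_some (hp0 : ∀ z, 0 ≤ p z) (hp1 : ∑ z, p z = 1) (u0' : α → β) (x0 : α) :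
    pr (fun ω : (α × β) × ((α → β) × Option α) => p ω.1 * Qc p lam ω.1 ω.2)
      (fun ω => ω.2) (u0', some x0) = lam * pmx p x0 * mm p u0' := by
  rw [pr_eq_sum_mul, Rlem hp0]
  dsimp only
  have step : ∀ x : α, ∑ u0 : α → β, ∑ w : Option α,
      pmx p x * mm p u0 * wgt lam x w *
        (@ite ℝ ((u0, w) = ((u0', some x0) : (α → β) × Option α))
          (Classical.propDecidable _) 1 0)
      = pmx p x * mm p u0' * wgt lam x (some x0) := by
    intro x
    rw [Finset.sum_eq_single u0']
    · rw [Finset.sum_eq_single (some x0)]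
      · simp
      · intro w _ hw; simp [hw]
      · simp
    · intro u0 _ hu0
      rw [Finset.sum_eq_zero]
      intro w _
      simp [Prod.ext_iff, hu0]
    · simp
  rw [Finset.sum_congr rfl fun x _ => step x]
  simp only [wgt]
  rw [Finset.sum_eq_single x0]
  · simp [mul_comm, mul_assoc, mul_left_comm]
  · intro x _ hx; rw [if_neg (by exact fun h => hx h.symm), mul_zero]
  · simp

lemma prU_none (hp0 : ∀ z, 0 ≤ p z) (hp1 : ∑ z, p z = 1) (u0' : α → β) :
    pr (fun ω : (α × β) × ((α → β) × Option α) => p ω.1 * Qc p lam ω.1 ω.2)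
      (fun ω => ω.2) (u0', none) = (1 - lam) * mm p u0' := by
  rw [pr_eq_sum_mul, Rlem hp0]
  dsimp only
  have step : ∀ x : α, ∑ u0 : α → β, ∑ w : Option α,
      pmx p x * mm p u0 * wgt lam x w *
        (@ite ℝ ((u0, w) = ((u0', none) : (α → β) × Option α))
          (Classical.propDecidable _) 1 0)
      = pmx p x * mm p u0' * wgt lam x none := by
    intro x
    rw [Finset.sum_eq_single u0']
    · rw [Finset.sum_eq_single (none : Option α)]
      · simp
      · intro w _ hw; simp [hw]
      · simp
    · intro u0 _ hu0
      rw [Finset.sum_eq_zero]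
      intro w _
      simp [Prod.ext_iff, hu0]
    · simp
  rw [Finset.sum_congr rfl fun x _ => step x]
  simp only [wgt]
  rw [Finset.sum_congr rfl fun x _ =>
    (by ring : pmx p x * mm p u0' * (1 - lam) = mm p u0' * (1 - lam) * pmx p x),
    ← Finset.mul_sum, pmx_sum hp1]
  ring

lemma prXU (hp0 : ∀ z, 0 ≤ p z) (x0 : α) (u0' : α → β) (w' : Option α) :
    pr (fun ω : (α × β) × ((α → β) × Option α) => p ω.1 * Qc p lam ω.1 ω.2)
      (fun ω => (ω.1.1, ω.2)) (x0, (u0', w')) =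
      pmx p x0 * mm p u0' * wgt lam x0 w' := by
  rw [pr_eq_sum_mul, Rlem hp0]
  dsimp only
  rw [Finset.sum_eq_single x0]
  · rw [Finset.sum_eq_single u0']
    · rw [Finset.sum_eq_single w']
      · simp
      · intro w _ hw; simp [hw]
      · simp
    · intro u0 _ hu0
      rw [Finset.sum_eq_zero]; intro w _; simp [Prod.ext_iff, hu0]
    · simp
  · intro x _ hx
    rw [Finset.sum_eq_zero]; intro u0 _
    rw [Finset.sum_eq_zero]; intro w _
    simp [Prod.ext_iff, hx]
  · simp

lemma prYU_some (hp0 : ∀ z, 0 ≤ p z) (y0 : β) (u0' : α → β) (x0 : α) :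
    pr (fun ω : (α × β) × ((α → β) × Option α) => p ω.1 * Qc p lam ω.1 ω.2)
      (fun ω => (ω.1.2, ω.2)) (y0, (u0', some x0)) =
      (if u0' x0 = y0 then (1:ℝ) else 0) * (lam * pmx p x0 * mm p u0') := by
  rw [pr_eq_sum_mul, Rlem hp0]
  dsimp only
  have step : ∀ x : α, ∑ u0 : α → β, ∑ w : Option α,
      pmx p x * mm p u0 * wgt lam x w *
        (@ite ℝ ((u0 x, (u0, w)) = ((y0, (u0', some x0)) : β × ((α → β) × Option α)))
          (Classical.propDecidable _) 1 0)
      = pmx p x * mm p u0' * wgt lam x (some x0) *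
          (if u0' x = y0 then (1:ℝ) else 0) := by
    intro x
    rw [Finset.sum_eq_single u0']
    · rw [Finset.sum_eq_single (some x0)]
      · by_cases h : u0' x = y0 <;> simp [Prod.ext_iff, h]
      · intro w _ hw; simp [Prod.ext_iff, hw]
      · simp
    · intro u0 _ hu0
      rw [Finset.sum_eq_zero]; intro w _; simp [Prod.ext_iff, hu0]
    · simp
  rw [Finset.sum_congr rfl fun x _ => step x]
  simp only [wgt]
  rw [Finset.sum_eq_single x0]
  · by_cases h : u0' x0 = y0 <;> simp [h] <;> ring
  · intro x _ hx; rw [if_neg (by exact fun h => hx h.symm)]; ring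
  · simp

lemma prYU_none (hp0 : ∀ z, 0 ≤ p z) (y0 : β) (u0' : α → β) :
    pr (fun ω : (α × β) × ((α → β) × Option α) => p ω.1 * Qc p lam ω.1 ω.2)
      (fun ω => (ω.1.2, ω.2)) (y0, (u0', none)) =
      (1 - lam) * mm p u0' * gg p u0' y0 := by
  rw [pr_eq_sum_mul, Rlem hp0]
  dsimp only
  have step : ∀ x : α, ∑ u0 : α → β, ∑ w : Option α,
      pmx p x * mm p u0 * wgt lam x w *
        (@ite ℝ ((u0 x, (u0, w)) = ((y0, (u0', none)) : β × ((α → β) × Option α)))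
          (Classical.propDecidable _) 1 0)
      = pmx p x * mm p u0' * wgt lam x none *
          (if u0' x = y0 then (1:ℝ) else 0) := by
    intro x
    rw [Finset.sum_eq_single u0']
    · rw [Finset.sum_eq_single (none : Option α)]
      · by_cases h : u0' x = y0 <;> simp [Prod.ext_iff, h]
      · intro w _ hw; simp [Prod.ext_iff, hw]
      · simp
    · intro u0 _ hu0
      rw [Finset.sum_eq_zero]; intro w _; simp [Prod.ext_iff, hu0]
    · simp
  rw [Finset.sum_congr rfl fun x _ => step x]
  simp only [wgt]
  have hx : ∀ x, pmx p x * mm p u0' * (1 - lam) * (if u0' x = y0 then (1:ℝ) else 0)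
      = ((1 - lam) * mm p u0') * (if u0' x = y0 then pmx p x else 0) := by
    intro x; by_cases h : u0' x = y0 <;> simp [h] <;> ring
  rw [Finset.sum_congr rfl fun x _ => hx x, ← Finset.mul_sum]
  unfold gg
  ring

end prform

section entcomp
variable {α β : Type} [Fintype α] [Fintype β] {p : α × β → ℝ} {lam : ℝ}

lemma pr_fst_channel {γ δ : Type} [Fintype γ]
    (q : α × β → γ → ℝ) (hq1 : ∀ z, ∑ u, q z u = 1) (V : α × β → δ) (d : δ) :
    pr (fun ω : (α × β) × γ => p ω.1 * q ω.1 ω.2) (fun ω => V ω.1) d = pr p V d := by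
  unfold pr
  rw [Fintype.sum_prod_type]
  refine Finset.sum_congr rfl fun z _ => ?_
  dsimp only
  by_cases h : V z = d
  · simp only [if_pos h, ← Finset.mul_sum, hq1, mul_one]
  · simp only [if_neg h, Finset.sum_const_zero]

lemma ent_fst : ent p (fun z : α × β => z.1) = -∑ x, pmx p x * Real.logb 2 (pmx p x) := by
  unfold ent; simp only [pr_fst]

lemma ent_snd : ent p (fun z : α × β => z.2) = -∑ y, pmy p y * Real.logb 2 (pmy p y) := by
  unfold ent; simp only [pr_snd]

lemma gg_nonneg (hp0 : ∀ z, 0 ≤ p z) (u0 : α → β) (y : β) : 0 ≤ gg p u0 y := by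
  refine Finset.sum_nonneg fun x _ => ?_
  split
  · exact pmx_nonneg hp0 x
  · exact le_rfl

lemma pmx_le_gg (hp0 : ∀ z, 0 ≤ p z) (u0 : α → β) (x : α) :
    pmx p x ≤ gg p u0 (u0 x) := by
  have h := Finset.single_le_sum (f := fun x' => if u0 x' = u0 x then pmx p x' else 0)
    (fun x' _ => by split; exacts [pmx_nonneg hp0 x', le_rfl])
    (Finset.mem_univ x)
  rw [if_pos rfl] at h
  exact h

lemma mlm3' (a b c : ℝ) (hb : b ≠ 0) (hc : c ≠ 0) :
    a * Real.logb 2 (a * b * c) =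
      a * Real.logb 2 a + a * Real.logb 2 b + a * Real.logb 2 c := by
  rcases eq_or_ne a 0 with h | h
  · simp [h]
  rw [Real.logb_mul (mul_ne_zero h hb) hc, Real.logb_mul h hb]
  ring

lemma wgt_some_self (x : α) : wgt lam x (some x) = lam := by simp [wgt]
lemma wgt_none (x : α) : wgt lam x none = 1 - lam := rfl

/-- collapse the w-sum in an entropy computation -/
lemma wcollapse (x : α) (u0 : α → β) (G : Option α → ℝ) :
    ∑ w : Option α, pmx p x * mm p u0 * wgt lam x w * G w
      = pmx p x * mm p u0 *
          (lam * G (some x) + (1 - lam) * G none) := by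
  rw [← wgt_eval x G, Finset.mul_sum]
  exact Finset.sum_congr rfl fun w _ => by ring

lemma E_U (hp0 : ∀ z, 0 ≤ p z) (hp1 : ∑ z, p z = 1) :
    ent (fun ω : (α × β) × ((α → β) × Option α) => p ω.1 * Qc p lam ω.1 ω.2)
      (fun ω => ω.2) =
      -((lam * Real.logb 2 lam + (1 - lam) * Real.logb 2 (1 - lam))
        + lam * (∑ x, pmx p x * Real.logb 2 (pmx p x))
        + ∑ u0 : α → β, mm p u0 * Real.logb 2 (mm p u0)) := by
  rw [ent_eq_sum_omega, Rlem hp0]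
  dsimp only
  simp only [wcollapse, prU_some hp0 hp1, prU_none hp0 hp1]
  have key : ∀ (x : α) (u0 : α → β),
      pmx p x * mm p u0 * (lam * Real.logb 2 (lam * pmx p x * mm p u0)
        + (1 - lam) * Real.logb 2 ((1 - lam) * mm p u0))
      = pmx p x * mm p u0 * ((lam * Real.logb 2 lam + (1 - lam) * Real.logb 2 (1 - lam))
        + lam * Real.logb 2 (pmx p x) + Real.logb 2 (mm p u0) + 0) := by
    intro x u0
    linear_combination mlm3 lam (pmx p x) (mm p u0) + pmx p x * mlm2 (1 - lam) (mm p u0)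
  rw [Finset.sum_congr rfl fun x _ => Finset.sum_congr rfl fun u0 _ => key x u0]
  rw [bilin (pmx p) (mm p) (pmx_sum hp1) (mm_sum hp0 hp1)
    (lam * Real.logb 2 lam + (1 - lam) * Real.logb 2 (1 - lam))
    (fun x => lam * Real.logb 2 (pmx p x)) (fun u0 => Real.logb 2 (mm p u0))
    (fun _ _ => 0)]
  simp only [mul_zero, Finset.sum_const_zero, add_zero]
  have hfold : ∑ x, pmx p x * (lam * Real.logb 2 (pmx p x))
      = lam * ∑ x, pmx p x * Real.logb 2 (pmx p x) := by
    rw [Finset.mul_sum]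
    exact Finset.sum_congr rfl fun x _ => by ring
  rw [hfold]

lemma E_XU (hp0 : ∀ z, 0 ≤ p z) (hp1 : ∑ z, p z = 1) :
    ent (fun ω : (α × β) × ((α → β) × Option α) => p ω.1 * Qc p lam ω.1 ω.2)
      (fun ω => (ω.1.1, ω.2)) =
      -((lam * Real.logb 2 lam + (1 - lam) * Real.logb 2 (1 - lam))
        + (∑ x, pmx p x * Real.logb 2 (pmx p x))
        + ∑ u0 : α → β, mm p u0 * Real.logb 2 (mm p u0)) := by
  rw [ent_eq_sum_omega, Rlem hp0]
  dsimp only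
  simp only [wcollapse, prXU hp0, wgt_some_self, wgt_none]
  have key : ∀ (x : α) (u0 : α → β),
      pmx p x * mm p u0 * (lam * Real.logb 2 (pmx p x * mm p u0 * lam)
        + (1 - lam) * Real.logb 2 (pmx p x * mm p u0 * (1 - lam)))
      = pmx p x * mm p u0 * ((lam * Real.logb 2 lam + (1 - lam) * Real.logb 2 (1 - lam))
        + Real.logb 2 (pmx p x) + Real.logb 2 (mm p u0) + 0) := by
    intro x u0
    linear_combination mlm3 (pmx p x) (mm p u0) lam + mlm3 (pmx p x) (mm p u0) (1 - lam)
  rw [Finset.sum_congr rfl fun x _ => Finset.sum_congr rfl fun u0 _ => key x u0]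
  rw [bilin (pmx p) (mm p) (pmx_sum hp1) (mm_sum hp0 hp1)
    (lam * Real.logb 2 lam + (1 - lam) * Real.logb 2 (1 - lam))
    (fun x => Real.logb 2 (pmx p x)) (fun u0 => Real.logb 2 (mm p u0))
    (fun _ _ => 0)]
  simp only [mul_zero, Finset.sum_const_zero, add_zero]

lemma E_YU (hp0 : ∀ z, 0 ≤ p z) (hp1 : ∑ z, p z = 1) :
    ent (fun ω : (α × β) × ((α → β) × Option α) => p ω.1 * Qc p lam ω.1 ω.2)
      (fun ω => (ω.1.2, ω.2)) =
      -((lam * Real.logb 2 lam + (1 - lam) * Real.logb 2 (1 - lam))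
        + lam * (∑ x, pmx p x * Real.logb 2 (pmx p x))
        + (∑ u0 : α → β, mm p u0 * Real.logb 2 (mm p u0))
        + ∑ x, ∑ u0 : α → β, pmx p x * mm p u0 *
            ((1 - lam) * Real.logb 2 (gg p u0 (u0 x)))) := by
  rw [ent_eq_sum_omega, Rlem hp0]
  dsimp only
  simp only [wcollapse, prYU_some hp0, prYU_none hp0, eq_self_iff_true, if_true, one_mul]
  have key : ∀ (x : α) (u0 : α → β),
      pmx p x * mm p u0 * (lam * Real.logb 2 (lam * pmx p x * mm p u0)
        + (1 - lam) * Real.logb 2 ((1 - lam) * mm p u0 * gg p u0 (u0 x)))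
      = pmx p x * mm p u0 * ((lam * Real.logb 2 lam + (1 - lam) * Real.logb 2 (1 - lam))
        + lam * Real.logb 2 (pmx p x) + Real.logb 2 (mm p u0)
        + (1 - lam) * Real.logb 2 (gg p u0 (u0 x))) := by
    intro x u0
    by_cases hpx : pmx p x = 0
    · simp [hpx]
    by_cases hm : mm p u0 = 0
    · simp [hm]
    have hg : gg p u0 (u0 x) ≠ 0 := by
      have h1 := pmx_le_gg hp0 u0 x
      have h2 := pmx_nonneg hp0 x
      intro h; rw [h] at h1
      exact hpx (le_antisymm h1 h2)
    linear_combination mlm3 lam (pmx p x) (mm p u0)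
      + pmx p x * mm p u0 * mlm3' (1 - lam) (mm p u0) (gg p u0 (u0 x)) hm hg
  rw [Finset.sum_congr rfl fun x _ => Finset.sum_congr rfl fun u0 _ => key x u0]
  rw [bilin (pmx p) (mm p) (pmx_sum hp1) (mm_sum hp0 hp1)
    (lam * Real.logb 2 lam + (1 - lam) * Real.logb 2 (1 - lam))
    (fun x => lam * Real.logb 2 (pmx p x)) (fun u0 => Real.logb 2 (mm p u0))
    (fun x u0 => (1 - lam) * Real.logb 2 (gg p u0 (u0 x)))]
  have hfold : ∑ x, pmx p x * (lam * Real.logb 2 (pmx p x))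
      = lam * ∑ x, pmx p x * Real.logb 2 (pmx p x) := by
    rw [Finset.mul_sum]
    exact Finset.sum_congr rfl fun x _ => by ring
  rw [hfold]

lemma E_X (hp0 : ∀ z, 0 ≤ p z) (hp1 : ∑ z, p z = 1) :
    ent (fun ω : (α × β) × ((α → β) × Option α) => p ω.1 * Qc p lam ω.1 ω.2)
      (fun ω => ω.1.1) = ent p (fun z => z.1) :=
  ent_congr fun a => pr_fst_channel (Qc p lam) (Qc_sum hp0 hp1) (fun z => z.1) a

lemma E_Y (hp0 : ∀ z, 0 ≤ p z) (hp1 : ∑ z, p z = 1) :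
    ent (fun ω : (α × β) × ((α → β) × Option α) => p ω.1 * Qc p lam ω.1 ω.2)
      (fun ω => ω.1.2) = ent p (fun z => z.2) :=
  ent_congr fun a => pr_fst_channel (Qc p lam) (Qc_sum hp0 hp1) (fun z => z.2) a

end entcomp

section transfer
variable {αβ γ δ : Type} [Fintype αβ] [Fintype γ] [Fintype δ]

lemma mi_fin {n : ℕ} (p : αβ → ℝ) (Q : αβ → γ → ℝ) (e : γ ≃ Fin n) (V : αβ → δ) :
    mi (fun ω : αβ × Fin n => p ω.1 * Q ω.1 (e.symm ω.2)) (fun ω => V ω.1) (fun ω => ω.2)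
      = mi (fun ω : αβ × γ => p ω.1 * Q ω.1 ω.2) (fun ω' => V ω'.1) (fun ω' => ω'.2) := by
  have hPE : (fun ω' : αβ × γ =>
      (fun ω : αβ × Fin n => p ω.1 * Q ω.1 (e.symm ω.2)) ((Equiv.prodCongr (Equiv.refl αβ) e) ω')) =
      fun ω' : αβ × γ => p ω'.1 * Q ω'.1 ω'.2 := by
    funext ω'
    simp [Equiv.prodCongr_apply, Prod.map]
  have hpr : ∀ {ρ : Type} (X'' : αβ × Fin n → ρ) (a : ρ),
      pr (fun ω : αβ × Fin n => p ω.1 * Q ω.1 (e.symm ω.2)) X'' a =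
        pr (fun ω' : αβ × γ => p ω'.1 * Q ω'.1 ω'.2) (fun ω' => X'' ((Equiv.prodCongr (Equiv.refl αβ) e) ω')) a := by
    intro ρ X'' a
    rw [← pr_reindex (Equiv.prodCongr (Equiv.refl αβ) e) (fun ω : αβ × Fin n => p ω.1 * Q ω.1 (e.symm ω.2)) X'' a, hPE]
  have ea : ent (fun ω : αβ × Fin n => p ω.1 * Q ω.1 (e.symm ω.2)) (fun ω => V ω.1)
      = ent (fun ω' : αβ × γ => p ω'.1 * Q ω'.1 ω'.2) (fun ω' => V ω'.1) := by
    refine (ent_congr fun a => hpr _ a).trans ?_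
    have hfun : (fun ω' : αβ × γ => V ((Equiv.prodCongr (Equiv.refl αβ) e) ω').1) = fun ω' : αβ × γ => V ω'.1 := by
      funext ω'; simp [Equiv.prodCongr_apply, Prod.map]
    rw [hfun]
  have eb : ent (fun ω : αβ × Fin n => p ω.1 * Q ω.1 (e.symm ω.2)) (fun ω => ω.2)
      = ent (fun ω' : αβ × γ => p ω'.1 * Q ω'.1 ω'.2) (fun ω' => ω'.2) := by
    refine (ent_congr fun a => hpr _ a).trans ?_
    have hfun : (fun ω' : αβ × γ => ((Equiv.prodCongr (Equiv.refl αβ) e) ω').2) = fun ω' : αβ × γ => e ω'.2 := by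
      funext ω'; simp [Equiv.prodCongr_apply, Prod.map]
    rw [hfun]
    exact ent_comp_equiv (fun ω' : αβ × γ => p ω'.1 * Q ω'.1 ω'.2) (fun ω' => ω'.2) e
  have ec : ent (fun ω : αβ × Fin n => p ω.1 * Q ω.1 (e.symm ω.2))
        (fun ω => (V ω.1, ω.2))
      = ent (fun ω' : αβ × γ => p ω'.1 * Q ω'.1 ω'.2) (fun ω' => (V ω'.1, ω'.2)) := by
    refine (ent_congr fun a => hpr _ a).trans ?_
    have hfun : (fun ω' : αβ × γ => (V ((Equiv.prodCongr (Equiv.refl αβ) e) ω').1, ((Equiv.prodCongr (Equiv.refl αβ) e) ω').2)) =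
        fun ω' : αβ × γ => (Equiv.prodCongr (Equiv.refl δ) e) (V ω'.1, ω'.2) := by
      funext ω'; simp [Equiv.prodCongr_apply, Prod.map]
    rw [hfun]
    exact ent_comp_equiv (fun ω' : αβ × γ => p ω'.1 * Q ω'.1 ω'.2) (fun ω' => (V ω'.1, ω'.2)) (Equiv.prodCongr (Equiv.refl δ) e)
  unfold mi
  rw [ea, eb, ec]

end transfer

/-- Lower bound L1: for 0 ≤ ε < I(X;Y), one has h_ε(P_{XY}) ≥ H(Y) - H(X) + ε. -/
theorem lower_bound_L1 {α β : Type} [Fintype α] [Fintype β]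
    (p : α × β → ℝ) (hp0 : ∀ z, 0 ≤ p z) (hp1 : ∑ z, p z = 1)
    (hHX : 0 < ent p (fun z : α × β => z.1)) (ε : ℝ) (hε0 : 0 ≤ ε)
    (hε1 : ε < mi p (fun z : α × β => z.1) (fun z : α × β => z.2)) :
    ent p (fun z : α × β => z.2) - ent p (fun z : α × β => z.1) + ε ≤ hEps p ε := by
  classical
  set lam : ℝ := ε / ent p (fun z : α × β => z.1) with hlam_def
  -- basic facts about lam
  have hmile : mi p (fun z : α × β => z.1) (fun z : α × β => z.2) ≤
      ent p (fun z : α × β => z.1) := by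
    have h := ent_le_ent_pair hp0 (fun z : α × β => z.1) (fun z : α × β => z.2)
    unfold mi
    linarith
  have hεH : ε ≤ ent p (fun z : α × β => z.1) := le_of_lt (lt_of_lt_of_le hε1 hmile)
  have hlam0 : 0 ≤ lam := div_nonneg hε0 (le_of_lt hHX)
  have hlam1 : lam ≤ 1 := by
    rw [hlam_def, div_le_one hHX]; exact hεH
  have hlam_eq : lam * ent p (fun z : α × β => z.1) = ε := by
    rw [hlam_def]; field_simp
  -- shorthand sums
  have hentfst : ent p (fun z : α × β => z.1)
      = -∑ x, pmx p x * Real.logb 2 (pmx p x) := ent_fst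
  -- the mutual informations of the constructed channel over the big alphabet
  have miXU : mi (fun ω : (α × β) × ((α → β) × Option α) => p ω.1 * Qc p lam ω.1 ω.2)
      (fun ω => ω.1.1) (fun ω => ω.2) = ε := by
    unfold mi
    rw [E_X hp0 hp1, E_U hp0 hp1, E_XU hp0 hp1, hentfst]
    rw [← hlam_eq, hentfst]
    ring
  have miYU : mi (fun ω : (α × β) × ((α → β) × Option α) => p ω.1 * Qc p lam ω.1 ω.2)
      (fun ω => ω.1.2) (fun ω => ω.2) =
      ent p (fun z : α × β => z.2) +
        ∑ x, ∑ u0 : α → β, pmx p x * mm p u0 *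
          ((1 - lam) * Real.logb 2 (gg p u0 (u0 x))) := by
    unfold mi
    rw [E_Y hp0 hp1, E_U hp0 hp1, E_YU hp0 hp1]
    ring
  -- lower bound for the B-sum
  have hB : (1 - lam) * ∑ x, pmx p x * Real.logb 2 (pmx p x) ≤
      ∑ x, ∑ u0 : α → β, pmx p x * mm p u0 *
        ((1 - lam) * Real.logb 2 (gg p u0 (u0 x))) := by
    have pointwise : ∀ (x : α) (u0 : α → β),
        pmx p x * mm p u0 * ((1 - lam) * Real.logb 2 (pmx p x)) ≤
          pmx p x * mm p u0 * ((1 - lam) * Real.logb 2 (gg p u0 (u0 x))) := by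
      intro x u0
      by_cases hpx : pmx p x = 0
      · simp [hpx]
      have hpos : 0 < pmx p x := lt_of_le_of_ne (pmx_nonneg hp0 x) (Ne.symm hpx)
      have hlog : Real.logb 2 (pmx p x) ≤ Real.logb 2 (gg p u0 (u0 x)) :=
        Real.logb_le_logb_of_le one_lt_two hpos (pmx_le_gg hp0 u0 x)
      have h1 : (1 - lam) * Real.logb 2 (pmx p x) ≤
          (1 - lam) * Real.logb 2 (gg p u0 (u0 x)) :=
        mul_le_mul_of_nonneg_left hlog (by linarith)
      exact mul_le_mul_of_nonneg_left h1
        (mul_nonneg (pmx_nonneg hp0 x) (mm_nonneg hp0 hp1 u0))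
    have hsum : ∑ x, ∑ u0 : α → β, pmx p x * mm p u0 *
        ((1 - lam) * Real.logb 2 (pmx p x)) ≤
        ∑ x, ∑ u0 : α → β, pmx p x * mm p u0 *
          ((1 - lam) * Real.logb 2 (gg p u0 (u0 x))) :=
      Finset.sum_le_sum fun x _ => Finset.sum_le_sum fun u0 _ => pointwise x u0
    refine le_trans (le_of_eq ?_) hsum
    rw [sum_sum_mulB (pmx p) (mm p) (mm_sum hp0 hp1)
      (fun x => (1 - lam) * Real.logb 2 (pmx p x))]
    rw [Finset.mul_sum]
    exact Finset.sum_congr rfl fun x _ => by ring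
  -- transfer to a Fin alphabet
  obtain ⟨n, ⟨eT⟩⟩ : ∃ n, Nonempty (((α → β) × Option α) ≃ Fin n) :=
    ⟨_, ⟨Fintype.equivFin _⟩⟩
  have hq0 : ∀ (z : α × β) (u : Fin n), 0 ≤ Qc p lam z (eT.symm u) :=
    fun z u => Qc_nonneg hp0 hp1 hlam0 hlam1 z _
  have hq1 : ∀ z : α × β, ∑ u, Qc p lam z (eT.symm u) = 1 := by
    intro z
    rw [Equiv.sum_comp eT.symm (fun g => Qc p lam z g)]
    exact Qc_sum hp0 hp1 z
  have hXU_fin : mi (fun ω : (α × β) × Fin n => p ω.1 * Qc p lam ω.1 (eT.symm ω.2))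
      (fun ω => ω.1.1) (fun ω => ω.2) = ε := by
    have h := mi_fin p (Qc p lam) eT (fun z : α × β => z.1)
    exact h.trans miXU
  have hYU_fin : mi (fun ω : (α × β) × Fin n => p ω.1 * Qc p lam ω.1 (eT.symm ω.2))
      (fun ω => ω.1.2) (fun ω => ω.2) =
      ent p (fun z : α × β => z.2) +
        ∑ x, ∑ u0 : α → β, pmx p x * mm p u0 *
          ((1 - lam) * Real.logb 2 (gg p u0 (u0 x))) := by
    have h := mi_fin p (Qc p lam) eT (fun z : α × β => z.2)
    exact h.trans miYU
  -- boundedness of the feasible set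
  have hbdd : BddAbove {r : ℝ | ∃ (n : ℕ) (q : α × β → Fin n → ℝ),
      (∀ z u, 0 ≤ q z u) ∧ (∀ z, ∑ u, q z u = 1) ∧
      mi (fun z : (α × β) × Fin n => p z.1 * q z.1 z.2) (fun z => z.1.1) (fun z => z.2) ≤ ε ∧
      r = mi (fun z : (α × β) × Fin n => p z.1 * q z.1 z.2) (fun z => z.1.2) (fun z => z.2)} := by
    refine ⟨ent p (fun z : α × β => z.2), ?_⟩
    rintro r ⟨n', q', hq0', hq1', _, rfl⟩
    have hnn : ∀ ω : (α × β) × Fin n', 0 ≤ p ω.1 * q' ω.1 ω.2 :=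
      fun ω => mul_nonneg (hp0 _) (hq0' _ _)
    have hpair := ent_le_ent_pair hnn
      (fun ω : (α × β) × Fin n' => ω.1.2) (fun ω => ω.2)
    have hY : ent (fun z : (α × β) × Fin n' => p z.1 * q' z.1 z.2) (fun z => z.1.2) =
        ent p (fun z : α × β => z.2) :=
      ent_congr fun a => pr_fst_channel q' hq1' (fun z : α × β => z.2) a
    unfold mi
    rw [hY]
    linarith [hpair]
  -- membership
  have hmem : mi (fun ω : (α × β) × Fin n => p ω.1 * Qc p lam ω.1 (eT.symm ω.2))
      (fun ω => ω.1.2) (fun ω => ω.2) ∈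
      {r : ℝ | ∃ (n : ℕ) (q : α × β → Fin n → ℝ),
        (∀ z u, 0 ≤ q z u) ∧ (∀ z, ∑ u, q z u = 1) ∧
        mi (fun z : (α × β) × Fin n => p z.1 * q z.1 z.2) (fun z => z.1.1) (fun z => z.2) ≤ ε ∧
        r = mi (fun z : (α × β) × Fin n => p z.1 * q z.1 z.2) (fun z => z.1.2) (fun z => z.2)} :=
    ⟨n, fun z u => Qc p lam z (eT.symm u), hq0, hq1, le_of_eq hXU_fin, rfl⟩
  -- final comparison
  have hfinal : ent p (fun z : α × β => z.2) - ent p (fun z : α × β => z.1) + ε ≤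
      mi (fun ω : (α × β) × Fin n => p ω.1 * Qc p lam ω.1 (eT.symm ω.2))
        (fun ω => ω.1.2) (fun ω => ω.2) := by
    rw [hYU_fin]
    have hstep : ent p (fun z : α × β => z.2) +
        (1 - lam) * ∑ x, pmx p x * Real.logb 2 (pmx p x) ≤
        ent p (fun z : α × β => z.2) +
          ∑ x, ∑ u0 : α → β, pmx p x * mm p u0 *
            ((1 - lam) * Real.logb 2 (gg p u0 (u0 x))) := by linarith
    refine le_trans ?_ hstep
    have hSX : ∑ x, pmx p x * Real.logb 2 (pmx p x) = -ent p (fun z : α × β => z.1) := by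
      rw [hentfst]; ring
    rw [hSX]
    nlinarith [hlam_eq]
  refine le_trans hfinal ?_
  unfold hEps
  exact le_csSup hbdd hmem
end

section
/- With W = X2 w.p. α2 and W = c w.p. 1-α2 (switch independent of everything), and Ū independent of W given (X1,X2,Y), the conditional mutual information satisfies I(Ū, W; X1, X2 | Y) = (1 - α2) I(Ū; X1, X2 | Y) + α2 H(X1, X2 | Y) - α2 H(X1 | Y, Ū, X2). -/
open scoped Classical
open Real

section
variable {Ω α β σ : Type} [Fintype Ω] (p : Ω → ℝ)

theorem sum_pr_eq_one [Fintype α] (hp1 : ∑ ω, p ω = 1) (X : Ω → α) :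
    ∑ a, pr p X a = 1 := by
  unfold pr
  rw [Finset.sum_comm]
  simpa using hp1

theorem pr_false_add_pr_true (hp1 : ∑ ω, p ω = 1) (S : Ω → Bool) :
    pr p S false + pr p S true = 1 := by
  rw [← sum_pr_eq_one p hp1 S, Fintype.sum_bool, add_comm]

theorem pr_comp [Fintype α] (X : Ω → α) (f : α → β) (b : β) :
    pr p (fun ω => f (X ω)) b = ∑ a, if f a = b then pr p X a else 0 := by
  simp only [pr, ← Finset.sum_filter]
  rw [Finset.sum_comm' (t' := Finset.univ.filter fun ω => f (X ω) = b)
    (s' := fun ω => {X ω})]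
  · simp
  · intro a ω
    simp only [Finset.mem_filter, Finset.mem_univ, true_and, Finset.mem_singleton]
    constructor <;> rintro ⟨h, rfl⟩ <;> simp [h]

theorem pr_comp_of_injective [Fintype α] (X : Ω → α) {f : α → β} (hf : f.Injective)
    (a : α) :
    pr p (fun ω => f (X ω)) (f a) = pr p X a := by
  simp [pr_comp, hf.eq_iff]

theorem pr_comp_eq_zero_of_notMem_range (X : Ω → α) {f : α → β} {b : β}
    (hb : b ∉ Set.range f) : pr p (fun ω => f (X ω)) b = 0 :=
  Finset.sum_eq_zero fun ω _ => if_neg fun h => hb ⟨X ω, h⟩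

theorem ent_comp_of_injective [Fintype α] [Fintype β] (X : Ω → α) {f : α → β}
    (hf : f.Injective) : ent p (fun ω => f (X ω)) = ent p X := by
  unfold ent
  rw [Fintype.sum_of_injective f hf]
  · intro b hb
    simp [pr_comp_eq_zero_of_notMem_range p X hb]
  · intro a
    rw [pr_comp_of_injective p X hf]

theorem sum_mul_pr_mul_logb [Fintype α] (hp1 : ∑ ω, p ω = 1) (X : Ω → α) (c : ℝ) :
    ∑ a, c * pr p X a * logb 2 (c * pr p X a) = c * logb 2 c - c * ent p X := by
  have hsplit : ∀ x, c * x * logb 2 (c * x) = c * logb 2 c * x + c * (x * logb 2 x) := by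
    intro x
    rcases eq_or_ne c 0 with rfl | hc
    · simp
    rcases eq_or_ne x 0 with rfl | hx
    · simp
    rw [logb_mul hc hx]
    ring
  simp only [hsplit, Finset.sum_add_distrib, ← Finset.mul_sum, sum_pr_eq_one p hp1, ent]
  ring

variable {p}

theorem IndepRV.comp_right [Fintype σ] [Fintype α] {S : Ω → σ} {T : Ω → α}
    (h : IndepRV p S T) (f : α → β) : IndepRV p S (fun ω => f (T ω)) := by
  intro s b
  refine (pr_comp p (fun ω => (S ω, T ω)) (Prod.map id f) (s, b)).trans ?_
  rw [pr_comp p T f, Finset.mul_sum, Fintype.sum_prod_type, Finset.sum_eq_single s]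
  · refine Finset.sum_congr rfl fun t _ => ?_
    simp [h s t, Prod.ext_iff]
  · intro s' _ hs'
    simp [Prod.ext_iff, hs']
  · simp

end

theorem ent_pair_randomizedResponse {Ω ζ β : Type} [Fintype Ω] [Fintype ζ] [Fintype β]
    (p : Ω → ℝ) (hp1 : ∑ ω, p ω = 1) (S : Ω → Bool) (Z : Ω → ζ) (X : Ω → β)
    (hind : IndepRV p S (fun ω => (Z ω, X ω))) :
    ent p (fun ω => (Z ω, (if S ω then some (X ω) else none : Option β))) =
      ent p S + pr p S false * ent p Z + pr p S true * ent p (fun ω => (Z ω, X ω)) := by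
  set W : Ω → Option β := fun ω => if S ω then some (X ω) else none
  have hnone : ∀ z, pr p (fun ω => (Z ω, W ω)) (z, none) = pr p S false * pr p Z z := by
    intro z
    rw [← hind.comp_right Prod.fst false z]
    refine Finset.sum_congr rfl fun ω _ => ?_
    cases hs : S ω <;> simp [W, hs]
  have hsome : ∀ z b, pr p (fun ω => (Z ω, W ω)) (z, some b) =
      pr p S true * pr p (fun ω => (Z ω, X ω)) (z, b) := by
    intro z b
    rw [← hind true (z, b)]
    refine Finset.sum_congr rfl fun ω _ => ?_
    cases hs : S ω <;> simp [W, hs]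
  have hsplit : ent p (fun ω => (Z ω, W ω)) =
      -(∑ z, pr p S false * pr p Z z * logb 2 (pr p S false * pr p Z z) +
      ∑ zx : ζ × β, pr p S true * pr p (fun ω => (Z ω, X ω)) zx *
        logb 2 (pr p S true * pr p (fun ω => (Z ω, X ω)) zx)) := by
    simp only [ent, Fintype.sum_prod_type, Fintype.sum_option, Finset.sum_add_distrib, hnone,
      hsome]
  rw [hsplit, sum_mul_pr_mul_logb p hp1, sum_mul_pr_mul_logb p hp1]
  simp only [ent, Fintype.sum_bool]
  ring

theorem ent_pair_randomizedResponse_of_comp {Ω ζ β : Type} [Fintype Ω] [Fintype ζ] [Fintype β]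
    (p : Ω → ℝ) (hp1 : ∑ ω, p ω = 1) (S : Ω → Bool) (Z : Ω → ζ) (f : ζ → β)
    (hind : IndepRV p S Z) :
    ent p (fun ω => (Z ω, (if S ω then some (f (Z ω)) else none : Option β))) =
      ent p S + ent p Z := by
  rw [ent_pair_randomizedResponse p hp1 S Z (fun ω => f (Z ω))
      (hind.comp_right fun z => (z, f z)),
    ent_comp_of_injective p Z (f := fun z => (z, f z)) fun _ _ h => congrArg Prod.fst h]
  linear_combination ent p Z * pr_false_add_pr_true p hp1 S

theorem randomized_response_cond_mi_general {Ω α β γ δ : Type}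
    [Fintype Ω] [Fintype α] [Fintype β] [Fintype γ] [Fintype δ]
    (p : Ω → ℝ) (hp1 : ∑ ω, p ω = 1)
    (X1 : Ω → α) (X2 : Ω → β) (Y : Ω → δ) (U : Ω → γ) (S : Ω → Bool) (α2 : ℝ)
    (hS : pr p S true = α2)
    (hSind : IndepRV p S (fun ω => (X1 ω, X2 ω, Y ω, U ω))) :
    miC p (fun ω => (U ω, (if S ω then some (X2 ω) else none : Option β)))
        (fun ω => (X1 ω, X2 ω)) Y =
      (1 - α2) * miC p U (fun ω => (X1 ω, X2 ω)) Y
        + α2 * entC p (fun ω => (X1 ω, X2 ω)) Y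
        - α2 * entC p X1 (fun ω => (Y ω, U ω, X2 ω)) := by
  set W : Ω → Option β := fun ω => if S ω then some (X2 ω) else none
  subst hS
  have hfalse : pr p S false = 1 - pr p S true :=
    eq_sub_of_add_eq (pr_false_add_pr_true p hp1 S)
  have hUWY : ent p (fun ω => ((U ω, W ω), Y ω)) = ent p S + pr p S false *
      ent p (fun ω => (U ω, Y ω)) + pr p S true * ent p (fun ω => (Y ω, U ω, X2 ω)) := by
    rw [ent_comp_of_injective p (fun ω => ((U ω, Y ω), W ω))
        (f := fun t => ((t.1.1, t.2), t.1.2)) (by intro _ _ h; simp_all [Prod.ext_iff]),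
      ent_pair_randomizedResponse p hp1 S (fun ω => (U ω, Y ω)) X2
        (hSind.comp_right fun t => ((t.2.2.2, t.2.2.1), t.2.1)),
      ent_comp_of_injective p (fun ω => (Y ω, U ω, X2 ω))
        (f := fun t => ((t.2.1, t.1), t.2.2)) (by intro _ _ h; simp_all [Prod.ext_iff])]
  have hUWXY : ent p (fun ω => (((U ω, W ω), (X1 ω, X2 ω)), Y ω)) =
      ent p S + ent p (fun ω => ((U ω, (X1 ω, X2 ω)), Y ω)) := by
    rw [ent_comp_of_injective p (fun ω => (((U ω, (X1 ω, X2 ω)), Y ω), W ω))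
        (f := fun t => (((t.1.1.1, t.2), t.1.1.2), t.1.2))
        (by intro _ _ h; simp_all [Prod.ext_iff]),
      ent_pair_randomizedResponse_of_comp p hp1 S (fun ω => ((U ω, (X1 ω, X2 ω)), Y ω))
        (fun t => t.1.2.2) (hSind.comp_right fun t => ((t.2.2.2, (t.1, t.2.1)), t.2.2.1))]
  have hUXY : ent p (fun ω => ((U ω, (X1 ω, X2 ω)), Y ω)) =
      ent p (fun ω => (X1 ω, Y ω, U ω, X2 ω)) :=
    ent_comp_of_injective p (fun ω => (X1 ω, Y ω, U ω, X2 ω))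
      (f := fun t => ((t.2.2.1, (t.1, t.2.2.2)), t.2.1)) (by intro _ _ h; simp_all [Prod.ext_iff])
  simp only [miC, entC]
  rw [hUWY, hUWXY, hUXY, hfalse]
  ring

/-- With W the randomized response of X2 (parameter α2, switch independent of (X1,X2,Y,Ū)) and
Ū independent of W given (X1,X2,Y):
I(Ū,W;X1,X2|Y) = (1-α2) I(Ū;X1,X2|Y) + α2 H(X1,X2|Y) - α2 H(X1|Y,Ū,X2). -/
theorem randomized_response_cond_mi {Ω α β γ δ : Type}
    [Fintype Ω] [Fintype α] [Fintype β] [Fintype γ] [Fintype δ]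
    (p : Ω → ℝ) (hp0 : ∀ ω, 0 ≤ p ω) (hp1 : ∑ ω, p ω = 1)
    (X1 : Ω → α) (X2 : Ω → β) (Y : Ω → δ) (U : Ω → γ) (S : Ω → Bool) (α2 : ℝ)
    (hα0 : 0 ≤ α2) (hα1 : α2 ≤ 1) (hS : pr p S true = α2)
    (hSind : IndepRV p S (fun ω => (X1 ω, X2 ω, Y ω, U ω)))
    (hUcond : miC p U (fun ω => (if S ω then some (X2 ω) else none : Option β))
      (fun ω => (X1 ω, X2 ω, Y ω)) = 0) :
    miC p (fun ω => (U ω, (if S ω then some (X2 ω) else none : Option β)))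
        (fun ω => (X1 ω, X2 ω)) Y =
      (1 - α2) * miC p U (fun ω => (X1 ω, X2 ω)) Y
        + α2 * entC p (fun ω => (X1 ω, X2 ω)) Y
        - α2 * entC p X1 (fun ω => (Y ω, U ω, X2 ω)) :=
  randomized_response_cond_mi_general p hp1 X1 X2 Y U S α2 hS hSind
end
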